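/- For every even integer k ≥ 4, the only Hamiltonian path in the digraph S_k starting at vertex 2k−1 is the path 2k−1, 2k−2, 1, 2, 3, …, 2k−3 (i.e., after 2k−1 and 2k−2 it visits the vertices 1 through 2k−3 in increasing order, ending at vertex 2k−3). -/

import Mathlib

/-- A directed path in the digraph with edge relation `E` and vertex set `Vset`:
a nonempty list of distinct vertices of `Vset`, with consecutive vertices joined
by directed edges. -/
def IsPathOn {α : Type*} (E : α → α → Prop) (Vset : Finset α) (p : List α) : Prop :=
  p ≠ [] ∧ p.Nodup ∧ p.Chain' E ∧ ∀ x ∈ p, x ∈ Vset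

/-- A Hamiltonian path from `u` to `v` in the digraph with edge relation `E`
and vertex set `Vset`: a list of distinct vertices containing every vertex of `Vset`
(and no others), starting at `u`, ending at `v`, with consecutive vertices joined
by directed edges. -/
def IsHamPathOn {α : Type*} (E : α → α → Prop) (Vset : Finset α) (u v : α)
    (p : List α) : Prop :=
  p.Nodup ∧ p.Chain' E ∧ p.head? = some u ∧ p.getLast? = some v ∧ ∀ x, x ∈ p ↔ x ∈ Vset

/-- The single visit condition: there is no collection of two or more pairwise
vertex-disjoint directed paths, each starting at an incoming vertex and ending at an
outgoing vertex, whose union visits every vertex. -/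
def SingleVisit {α : Type*} (E : α → α → Prop) (Vset : Finset α) {k : ℕ}
    (inc out : Fin k → α) : Prop :=
  ¬ ∃ P : Finset (List α), 2 ≤ P.card ∧
      (∀ p ∈ P, IsPathOn E Vset p ∧ (∃ j, p.head? = some (inc j)) ∧
        (∃ m, p.getLast? = some (out m))) ∧
      (∀ p ∈ P, ∀ q ∈ P, p ≠ q → ∀ x, x ∈ p → x ∉ q) ∧
      (∀ x ∈ Vset, ∃ p ∈ P, x ∈ p)

/-- A `k`-in-out graph: a digraph (no loops, all edges within the vertex set) together
with `k` distinct incoming vertices and `k` distinct outgoing vertices (the two sets may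
overlap), satisfying the paired vertices condition and the single visit condition. -/
structure IsInOutGraph {α : Type*} (E : α → α → Prop) (Vset : Finset α) {k : ℕ}
    (inc out : Fin k → α) : Prop where
  no_loops : ∀ x, ¬ E x x
  edge_mem : ∀ x y, E x y → x ∈ Vset ∧ y ∈ Vset
  inc_mem : ∀ j, inc j ∈ Vset
  out_mem : ∀ j, out j ∈ Vset
  inc_inj : Function.Injective inc
  out_inj : Function.Injective out
  paired : ∀ j m, (∃ p, IsHamPathOn E Vset (inc j) (out m) p) ↔ j = m
  single_visit : SingleVisit E Vset inc out

/-- The directed edge set of the graph `S_k` for even `k ≥ 4`. -/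
def evenEdges (k : ℕ) : Finset (ℕ × ℕ) :=
  ((Finset.Icc 1 ((k - 2) / 2)).biUnion fun i =>
      {(4*i-2, 4*i-1), (4*i-1, 4*i-2), (4*i-1, 4*i), (4*i, 4*i-1),
        (4*i, 4*i+1), (4*i+1, 4*i)}) ∪
  ((Finset.Icc 1 ((k - 4) / 2)).biUnion fun i => {(4*i-2, 4*i+5), (4*i+1, 4*i+2)}) ∪
  ({(1, 2), (2*k-6, 2*k-1), (2*k-3, 2*k-2), (2*k-2, 1), (2*k-2, 5),
    (2*k-1, 2*k-2)} : Finset (ℕ × ℕ))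

/-- The `m`-th outgoing vertex `o_m` (with `1 ≤ m ≤ k`) of `S_k` for even `k ≥ 4`:
`o_1 = 3`, `o_{k-2} = 2k-1`, `o_{k-1} = 2k-7`, `o_k = 2k-3`, and otherwise
`o_{2j} = 4j+3` and `o_{2j+1} = 4j-3`. -/
def evenOut (k m : ℕ) : ℕ :=
  if m = 1 then 3
  else if m = k - 2 then 2*k - 1
  else if m = k - 1 then 2*k - 7
  else if m = k then 2*k - 3
  else if Even m then 2*m + 3
  else 2*m - 5

/-!
Write `k = 2t + 4`, so that the vertices are `1, …, 4t+7` and the claimed path is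
`4t+7, 4t+6, 1, 2, …, 4t+5`. This path is forced step by step. The only edge out of `4t+7`
goes to `4t+6`; from there the path must go to `1`, because `1` can only be entered from
`4t+6`. Once `1, …, x` have been visited in order, the only unvisited out-neighbour of `x`
besides `x+1` is `x+7` (when `x ≡ 2 mod 4`), and that jump strands the block
`x+1, x+2, x+3`: then `x+1` can only be entered from `x+2`, hence `x+2` only from `x+3`,
and every in-neighbour of `x+3` already has its successor.
-/

namespace List

variable {α : Type*} {l : List α} {x y z : α}

theorem pair_infix_iff : [x, y] <:+: l ↔ ∃ k, l[k]? = some x ∧ l[k + 1]? = some y := by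
  rw [infix_iff_getElem?]
  constructor
  · rintro ⟨k, -, h⟩
    exact ⟨k, by simpa using h 0 (by simp), by simpa [Nat.add_comm] using h 1 (by simp)⟩
  · rintro ⟨k, hx, hy⟩
    refine ⟨k, ?_, fun i hi => ?_⟩
    · have := (getElem?_eq_some_iff.mp hy).1
      simp only [length_cons, length_nil]
      omega
    · match i, hi with
      | 0, _ => simpa using hx
      | 1, _ => simpa [Nat.add_comm] using hy

theorem Nodup.pair_infix_right_unique (hl : l.Nodup) (hxy : [x, y] <:+: l)
    (hxz : [x, z] <:+: l) : y = z := by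
  obtain ⟨i, hx, hy⟩ := pair_infix_iff.mp hxy
  obtain ⟨j, hx', hz⟩ := pair_infix_iff.mp hxz
  have hij : i = j := (getElem?_inj (getElem?_eq_some_iff.mp hx).1 hl).mp (hx.trans hx'.symm)
  subst hij
  exact Option.some.inj (hy.symm.trans hz)

theorem Nodup.not_pair_infix_swap (hl : l.Nodup) (hxy : [x, y] <:+: l) :
    ¬ [y, x] <:+: l := by
  rintro hyx
  obtain ⟨i, hx, hy⟩ := pair_infix_iff.mp hxy
  obtain ⟨j, hy', hx'⟩ := pair_infix_iff.mp hyx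
  have hij : i = j + 1 := (getElem?_inj (getElem?_eq_some_iff.mp hx).1 hl).mp (hx.trans hx'.symm)
  have hji : i + 1 = j := (getElem?_inj (getElem?_eq_some_iff.mp hy).1 hl).mp (hy.trans hy'.symm)
  omega

theorem exists_pair_infix_of_mem (hy : y ∈ l) (hne : l.head? ≠ some y) :
    ∃ x, [x, y] <:+: l := by
  induction l with
  | nil => cases hy
  | cons a l ih =>
    have hya : y ≠ a := fun h => hne (by simp [h])
    have hyl : y ∈ l := (mem_cons.mp hy).resolve_left hya
    obtain ⟨b, l', rfl⟩ := exists_cons_of_ne_nil (ne_nil_of_mem hyl)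
    by_cases hyb : y = b
    · exact ⟨a, hyb ▸ (prefix_append [a, b] l').isInfix⟩
    · obtain ⟨x, hx⟩ := ih hyl (by simpa [eq_comm] using hyb)
      exact ⟨x, hx.trans (infix_cons (infix_refl _))⟩

theorem pair_infix_range' {s n a : ℕ} (hs : s ≤ a) (hn : a + 1 < s + n) :
    [a, a + 1] <:+: range' s n :=
  pair_infix_iff.mpr ⟨a - s, by rw [getElem?_range' (by omega)]; congr 1; omega,
    by rw [getElem?_range' (by omega)]; congr 1; omega⟩

end List

namespace IsHamPathOn

variable {α : Type*} {E : α → α → Prop} {Vset : Finset α} {u v x y : α} {p : List α}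

theorem length_eq_card [DecidableEq α] (hp : IsHamPathOn E Vset u v p) :
    p.length = Vset.card := by
  obtain ⟨hnd, -, -, -, hmem⟩ := hp
  rw [← List.toFinset_card_of_nodup hnd]
  congr 1
  ext x
  simp [hmem x]

theorem rel_of_pair_infix (hp : IsHamPathOn E Vset u v p) (h : [x, y] <:+: p) : E x y :=
  List.isChain_pair.mp (List.IsChain.infix hp.2.1 h)

theorem exists_pred (hp : IsHamPathOn E Vset u v p) (hy : y ∈ Vset) (hyu : y ≠ u) :
    ∃ x, [x, y] <:+: p ∧ E x y := by
  have ⟨_, _, hhead, _, hmem⟩ := hp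
  obtain ⟨x, hx⟩ := List.exists_pair_infix_of_mem ((hmem y).2 hy) (by
    rw [hhead]; simpa using hyu.symm)
  exact ⟨x, hx, hp.rel_of_pair_infix hx⟩

end IsHamPathOn

theorem mem_evenEdges_iff (t x y : ℕ) :
    (x, y) ∈ evenEdges (2 * t + 4) ↔
      (∃ i, 1 ≤ i ∧ i ≤ t + 1 ∧
        ((x = 4*i-2 ∧ y = 4*i-1) ∨ (x = 4*i-1 ∧ y = 4*i-2) ∨ (x = 4*i-1 ∧ y = 4*i) ∨
         (x = 4*i ∧ y = 4*i-1) ∨ (x = 4*i ∧ y = 4*i+1) ∨ (x = 4*i+1 ∧ y = 4*i))) ∨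
      (∃ i, 1 ≤ i ∧ i ≤ t ∧ ((x = 4*i-2 ∧ y = 4*i+5) ∨ (x = 4*i+1 ∧ y = 4*i+2))) ∨
      (x = 1 ∧ y = 2) ∨ (x = 4*t+2 ∧ y = 4*t+7) ∨ (x = 4*t+5 ∧ y = 4*t+6) ∨
      (x = 4*t+6 ∧ y = 1) ∨ (x = 4*t+6 ∧ y = 5) ∨ (x = 4*t+7 ∧ y = 4*t+6) := by
  have e1 : (2*t+4-2)/2 = t+1 := by omega
  have e2 : (2*t+4-4)/2 = t := by omega
  have e3 : 2*(2*t+4)-6 = 4*t+2 := by omega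
  have e4 : 2*(2*t+4)-1 = 4*t+7 := by omega
  have e5 : 2*(2*t+4)-3 = 4*t+5 := by omega
  have e6 : 2*(2*t+4)-2 = 4*t+6 := by omega
  simp only [evenEdges, e1, e2, e3, e4, e5, e6, Finset.mem_union, Finset.mem_biUnion,
    Finset.mem_Icc, Finset.mem_insert, Finset.mem_singleton, Prod.mk.injEq, and_assoc,
    or_assoc]

section Neighbours

variable {t x y z : ℕ}

theorem evenEdges_top_out (h : (4*t+7, y) ∈ evenEdges (2*t+4)) : y = 4*t+6 := by
  rw [mem_evenEdges_iff] at h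
  rcases h with ⟨i, h1, h2, h⟩ | ⟨i, h1, h2, h⟩ | h <;> omega

theorem evenEdges_hub_out (h : (4*t+6, y) ∈ evenEdges (2*t+4)) : y = 1 ∨ y = 5 := by
  rw [mem_evenEdges_iff] at h
  rcases h with ⟨i, h1, h2, h⟩ | ⟨i, h1, h2, h⟩ | h <;> omega

theorem evenEdges_in_one (h : (x, 1) ∈ evenEdges (2*t+4)) : x = 4*t+6 := by
  rw [mem_evenEdges_iff] at h
  rcases h with ⟨i, h1, h2, h⟩ | ⟨i, h1, h2, h⟩ | h <;> omega

theorem evenEdges_low_out (hx : 1 ≤ x) (hx' : x ≤ 4*t+4)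
    (h : (x, y) ∈ evenEdges (2*t+4)) :
    y = x + 1 ∨ (1 ≤ y ∧ y + 1 = x) ∨ (x % 4 = 2 ∧ y = x + 7 ∧ x + 2 ≤ 4*t) ∨
      y = 4*t+7 := by
  rw [mem_evenEdges_iff] at h
  rcases h with ⟨i, h1, h2, h⟩ | ⟨i, h1, h2, h⟩ | h <;> omega

theorem evenEdges_block_in_fst (hx : x % 4 = 2) (hx' : x + 2 ≤ 4*t)
    (h : (z, x+1) ∈ evenEdges (2*t+4)) : z = x ∨ z = x + 2 := by
  rw [mem_evenEdges_iff] at h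
  rcases h with ⟨i, h1, h2, h⟩ | ⟨i, h1, h2, h⟩ | h <;> omega

theorem evenEdges_block_in_snd (hx : x % 4 = 2) (hx' : x + 2 ≤ 4*t)
    (h : (z, x+2) ∈ evenEdges (2*t+4)) : z = x + 1 ∨ z = x + 3 := by
  rw [mem_evenEdges_iff] at h
  rcases h with ⟨i, h1, h2, h⟩ | ⟨i, h1, h2, h⟩ | h <;> omega

theorem evenEdges_block_in_thd (hx : x % 4 = 2) (hx' : x + 2 ≤ 4*t)
    (h : (z, x+3) ∈ evenEdges (2*t+4)) : z = x + 2 ∨ z + 4 = x ∨ z = 4*t+6 := by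
  rw [mem_evenEdges_iff] at h
  rcases h with ⟨i, h1, h2, h⟩ | ⟨i, h1, h2, h⟩ | h <;> omega

theorem evenEdges_succ (hx : 1 ≤ x) (hx' : x ≤ 4*t+4) : (x, x+1) ∈ evenEdges (2*t+4) := by
  rw [mem_evenEdges_iff]
  rcases (by omega : x % 4 = 0 ∨ x = 1 ∨ (x % 4 = 1 ∧ 5 ≤ x) ∨ x % 4 = 2 ∨ x % 4 = 3)
    with h | h | h | h | h
  · exact Or.inl ⟨x/4, by omega, by omega, by omega⟩
  · omega
  · exact Or.inr (Or.inl ⟨x/4, by omega, by omega, by omega⟩)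
  · exact Or.inl ⟨(x+2)/4, by omega, by omega, by omega⟩
  · exact Or.inl ⟨(x+1)/4, by omega, by omega, by omega⟩

theorem evenEdges_top_hub : (4*t+7, 4*t+6) ∈ evenEdges (2*t+4) := by
  rw [mem_evenEdges_iff]; omega

theorem evenEdges_hub_one : (4*t+6, 1) ∈ evenEdges (2*t+4) := by
  rw [mem_evenEdges_iff]; omega

end Neighbours

def forcedPrefix (t x : ℕ) : List ℕ := (4*t+7) :: (4*t+6) :: List.range' 1 x

section ForcedPrefix

variable {t x y : ℕ}

@[simp]
theorem length_forcedPrefix : (forcedPrefix t x).length = x + 2 := by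
  simp [forcedPrefix]

@[simp]
theorem mem_forcedPrefix :
    y ∈ forcedPrefix t x ↔ y = 4*t+7 ∨ y = 4*t+6 ∨ (1 ≤ y ∧ y ≤ x) := by
  simp only [forcedPrefix, List.mem_cons, List.mem_range'_1]
  omega

theorem forcedPrefix_succ : forcedPrefix t (x + 1) = forcedPrefix t x ++ [x + 1] := by
  simp [forcedPrefix, List.range'_concat, Nat.add_comm]

theorem hub_one_infix_forcedPrefix (hx : 1 ≤ x) : [4*t+6, 1] <:+: forcedPrefix t x :=
  List.pair_infix_iff.mpr ⟨1, rfl, by simp [forcedPrefix, List.getElem?_range' hx]⟩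

theorem pair_infix_forcedPrefix (hy : 1 ≤ y) (hyx : y + 1 ≤ x) :
    [y, y + 1] <:+: forcedPrefix t x :=
  (List.pair_infix_range' hy (by omega)).trans
    (List.infix_cons (List.infix_cons (List.infix_refl _)))

end ForcedPrefix

section HamPath

variable {t x v : ℕ} {p : List ℕ}

theorem not_pair_infix_jump
    (hp : IsHamPathOn (fun x y => (x, y) ∈ evenEdges (2*t+4)) (Finset.Icc 1 (4*t+7))
      (4*t+7) v p)
    (hx : x % 4 = 2) (hx' : x + 2 ≤ 4*t) (hpre : forcedPrefix t x <+: p) :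
    ¬ [x, x + 7] <:+: p := by
  intro hjump
  have hnd := hp.1
  obtain ⟨a, ha, hea⟩ := hp.exists_pred (y := x + 1) (by simp; omega) (by omega)
  obtain ⟨b, hb, heb⟩ := hp.exists_pred (y := x + 2) (by simp; omega) (by omega)
  obtain ⟨c, hc, hec⟩ := hp.exists_pred (y := x + 3) (by simp; omega) (by omega)
  obtain rfl : a = x + 2 := by
    rcases evenEdges_block_in_fst hx hx' hea with rfl | rfl
    · have := hnd.pair_infix_right_unique hjump ha; omega
    · rfl
  obtain rfl : b = x + 3 := by
    rcases evenEdges_block_in_snd hx hx' heb with rfl | rfl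
    · exact absurd hb (hnd.not_pair_infix_swap ha)
    · rfl
  rcases evenEdges_block_in_thd hx hx' hec with rfl | hcx | rfl
  · exact hnd.not_pair_infix_swap hb hc
  · have := hnd.pair_infix_right_unique
      ((pair_infix_forcedPrefix (by omega) (by omega)).trans hpre.isInfix) hc
    omega
  · have := hnd.pair_infix_right_unique
      ((hub_one_infix_forcedPrefix (by omega)).trans hpre.isInfix) hc
    omega

theorem forcedPrefix_zero_prefix
    (hp : IsHamPathOn (fun x y => (x, y) ∈ evenEdges (2*t+4)) (Finset.Icc 1 (4*t+7))
      (4*t+7) v p) :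
    forcedPrefix t 0 <+: p := by
  obtain ⟨r, rfl⟩ := List.head?_eq_some_iff.mp hp.2.2.1
  obtain ⟨y, r, rfl⟩ := List.exists_cons_of_ne_nil (l := r) (by
    rintro rfl; simpa using hp.length_eq_card)
  obtain rfl := evenEdges_top_out (hp.rel_of_pair_infix (List.prefix_append [_, y] r).isInfix)
  exact List.prefix_append _ r

theorem forcedPrefix_succ_prefix
    (hp : IsHamPathOn (fun x y => (x, y) ∈ evenEdges (2*t+4)) (Finset.Icc 1 (4*t+7))
      (4*t+7) v p)
    (hx : x < 4*t+5) (hpre : forcedPrefix t x <+: p) : forcedPrefix t (x + 1) <+: p := by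
  obtain ⟨r, rfl⟩ := hpre
  have hlen : (forcedPrefix t x ++ r).length = 4*t+7 := by simpa using hp.length_eq_card
  obtain ⟨y, r, rfl⟩ := List.exists_cons_of_ne_nil (l := r) (by
    rintro rfl; simp only [List.append_nil, length_forcedPrefix] at hlen; omega)
  have hy : y ∉ forcedPrefix t x := fun h =>
    List.disjoint_of_nodup_append hp.1 h List.mem_cons_self
  suffices y = x + 1 by subst this; rw [forcedPrefix_succ]; exact ⟨r, by simp⟩
  rcases Nat.eq_zero_or_pos x with rfl | hx0
  · rcases evenEdges_hub_out (hp.rel_of_pair_infix ⟨[4*t+7], r, rfl⟩) with rfl | rfl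
    · rfl
    · obtain ⟨z, hz, hz1⟩ := hp.exists_pred (y := 1) (by simp) (by omega)
      obtain rfl := evenEdges_in_one hz1
      have := hp.1.pair_infix_right_unique hz ⟨[4*t+7], r, rfl⟩
      omega
  · have hxy : [x, y] <:+: forcedPrefix t x ++ y :: r := by
      refine ⟨forcedPrefix t (x - 1), r, ?_⟩
      rw [show x = x - 1 + 1 by omega, forcedPrefix_succ]
      simp
    rcases evenEdges_low_out hx0 (by omega) (hp.rel_of_pair_infix hxy) with
      h | h | ⟨h4, rfl, hle⟩ | rfl
    · exact h
    · exact (hy (by simp; omega)).elim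
    · exact absurd hxy (not_pair_infix_jump hp h4 hle (List.prefix_append _ _))
    · exact (hy (by simp)).elim

theorem eq_forcedPrefix_of_isHamPathOn
    (hp : IsHamPathOn (fun x y => (x, y) ∈ evenEdges (2*t+4)) (Finset.Icc 1 (4*t+7))
      (4*t+7) v p) :
    p = forcedPrefix t (4*t+5) := by
  have hpre : ∀ x ≤ 4*t+5, forcedPrefix t x <+: p := by
    intro x hx
    induction x with
    | zero => exact forcedPrefix_zero_prefix hp
    | succ x ih => exact forcedPrefix_succ_prefix hp (by omega) (ih (by omega))
  refine ((hpre _ le_rfl).eq_of_length ?_).symm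
  rw [hp.length_eq_card]
  simp

theorem isHamPathOn_forcedPrefix :
    IsHamPathOn (fun x y => (x, y) ∈ evenEdges (2*t+4)) (Finset.Icc 1 (4*t+7)) (4*t+7) (4*t+5)
      (forcedPrefix t (4*t+5)) := by
  refine ⟨?_, ?_, rfl, ?_, fun y => by simp; omega⟩
  · simp only [forcedPrefix, List.nodup_cons, List.mem_cons, List.mem_range'_1]
    exact ⟨by omega, by omega, List.nodup_range'⟩
  · have hrange : (List.range' 1 (4*t+5)).IsChain (fun x y => (x, y) ∈ evenEdges (2*t+4)) :=
      (List.isChain_range' 1 (4*t+5) 1).imp_of_mem_imp fun a b ha hb hab => by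
        rw [List.mem_range'_1] at ha hb; subst hab
        exact evenEdges_succ ha.1 (by omega)
    exact (hrange.cons (by simp [List.range'_succ, evenEdges_hub_one])).cons
      (by simp [evenEdges_top_hub])
  · simp [forcedPrefix, List.getLast?_cons, List.getLast?_range']

end HamPath

/-- for even `k ≥ 4`, the only Hamiltonian path in `S_k` starting at
vertex `2k - 1` is `2k-1, 2k-2, 1, 2, 3, …, 2k-3`. -/
theorem evenSk_unique_hamPath_from_last (k : ℕ) (hk : 4 ≤ k) (hke : Even k) :
    IsHamPathOn (fun x y => (x, y) ∈ evenEdges k) (Finset.Icc 1 (2 * k - 1))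
      (2 * k - 1) (2 * k - 3)
      ((2 * k - 1) :: (2 * k - 2) :: List.range' 1 (2 * k - 3)) ∧
    ∀ (v : ℕ) (p : List ℕ),
      IsHamPathOn (fun x y => (x, y) ∈ evenEdges k) (Finset.Icc 1 (2 * k - 1))
        (2 * k - 1) v p →
      p = (2 * k - 1) :: (2 * k - 2) :: List.range' 1 (2 * k - 3) := by
  obtain ⟨t, rfl⟩ : ∃ t, k = 2 * t + 4 := ⟨k / 2 - 2, by obtain ⟨c, hc⟩ := hke; omega⟩
  rw [show 2 * (2 * t + 4) - 1 = 4 * t + 7 by omega, show 2 * (2 * t + 4) - 2 = 4 * t + 6 by omega,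
    show 2 * (2 * t + 4) - 3 = 4 * t + 5 by omega]
  exact ⟨isHamPathOn_forcedPrefix, fun _ _ => eq_forcedPrefix_of_isHamPathOn⟩
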